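/- Let A and B be connected subsets of a tree T with ∂A = ∂B ≠ ∅ (boundaries of ends). Then A ∩ B ≠ ∅, and every connected component of the symmetric difference A △ B is finite. -/

import Mathlib

/-! A rooted locally finite tree encoded by a branching function `c : List ℕ → ℕ`,
its end compactification, and the boundary `∂A` of a vertex set `A`. -/

def vertexOK (c : List ℕ → ℕ) (l : List ℕ) : Prop :=
  ∀ (p : List ℕ) (k : ℕ), (p ++ [k]) <+: l → k < c p

def endOK (c : List ℕ → ℕ) (f : ℕ → ℕ) : Prop :=
  ∀ n : ℕ, vertexOK c (List.ofFn fun i : Fin n => f i)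

def Vtx (c : List ℕ → ℕ) := {l : List ℕ // vertexOK c l}

def Ends (c : List ℕ → ℕ) := {f : ℕ → ℕ // endOK c f}

/-- The end compactification `T̂ = T ∪ ∂T` as a type. -/
def Comp (c : List ℕ → ℕ) := Vtx c ⊕ Ends c

def vtxIncl (c : List ℕ → ℕ) : Vtx c → Comp c := Sum.inl

def endIncl (c : List ℕ → ℕ) : Ends c → Comp c := Sum.inr

/-- `T̂_v`: the points of the compactification extending the vertex `v`. -/
def hatT (c : List ℕ → ℕ) (v : Vtx c) : Set (Comp c) :=
  {z | Sum.elim (fun w : Vtx c => v.1 <+: w.1)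
      (fun f : Ends c => List.ofFn (fun i : Fin v.1.length => f.1 i) = v.1) z}

/-- The topology of the end compactification. -/
instance compTopology (c : List ℕ → ℕ) : TopologicalSpace (Comp c) :=
  TopologicalSpace.generateFrom
    ({s | ∃ v : Vtx c, s = {vtxIncl c v}} ∪ {s | ∃ v : Vtx c, s = hatT c v})

/-- The boundary `∂A ⊆ ∂T` of a set of vertices `A`: the ends lying in the closure
of `A` in the end compactification. -/
def bdry (c : List ℕ → ℕ) (A : Set (Vtx c)) : Set (Ends c) :=
  {f | endIncl c f ∈ closure (vtxIncl c '' A)}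

/-- The tree as a simple graph on its vertices: adjacency is the parent-child relation. -/
def treeGraph (c : List ℕ → ℕ) : SimpleGraph (Vtx c) where
  Adj v w := (∃ k, w.1 = v.1 ++ [k]) ∨ (∃ k, v.1 = w.1 ++ [k])
  symm := by
    constructor
    intro v w h
    exact h.symm
  loopless := by
    constructor
    intro v h
    rcases h with ⟨k, hk⟩ | ⟨k, hk⟩ <;>
    · have := congrArg List.length hk
      simp at this

/-! Paths in a tree are unique, so a connected set `S` containing a vertex `a` contains every
ancestor of its points that is not an ancestor of `a`. Hence if an end `f` lies in `∂S`, i.e.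
every vertex of the ray `f` has a descendant in `S`, then the ray is eventually inside `S`.
Applied to `A` and `B` at an end of `∂A = ∂B`, this gives a vertex of `A ∩ B`. If a component
`C` of `A △ B` were infinite, König's lemma would give an end in `∂C ⊆ ∂A ∪ ∂B = ∂A = ∂B`,
and the ray of that end would eventually lie in `A ∩ B ∩ C`, contradicting `C ⊆ A △ B`. -/

open Filter Topology

variable {c : List ℕ → ℕ}

lemma vertexOK.of_prefix {l p : List ℕ} (h : vertexOK c l) (hp : p <+: l) : vertexOK c p :=
  fun q k hq => h q k (hq.trans hp)

namespace Ends

def trunc (f : Ends c) (n : ℕ) : Vtx c := ⟨List.ofFn fun i : Fin n => f.1 i, f.2 n⟩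

lemma length_trunc (f : Ends c) (n : ℕ) : (f.trunc n).1.length = n := List.length_ofFn

lemma trunc_succ (f : Ends c) (n : ℕ) : (f.trunc (n + 1)).1 = (f.trunc n).1 ++ [f.1 n] :=
  List.ofFn_succ_last

lemma trunc_prefix_trunc (f : Ends c) {m n : ℕ} (h : m ≤ n) :
    (f.trunc m).1 <+: (f.trunc n).1 := by
  induction n, h using Nat.le_induction with
  | base => exact List.prefix_refl _
  | succ n _ ih => exact ih.trans (f.trunc_succ n ▸ List.prefix_append _ _)

end Ends

lemma endIncl_mem_hatT_iff {f : Ends c} {v : Vtx c} :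
    endIncl c f ∈ hatT c v ↔ f.trunc v.1.length = v :=
  ⟨fun h => Subtype.ext h, fun h => congrArg Subtype.val h⟩

lemma isOpen_hatT (v : Vtx c) : IsOpen (hatT c v) :=
  TopologicalSpace.isOpen_generateFrom_of_mem (Or.inr ⟨v, rfl⟩)

lemma hatT_anti {v w : Vtx c} (h : v.1 <+: w.1) : hatT c w ⊆ hatT c v := by
  rintro (u | f) hz
  · exact h.trans hz
  · change endIncl c f ∈ hatT c w at hz
    change endIncl c f ∈ hatT c v
    rw [endIncl_mem_hatT_iff] at hz ⊢
    have hpre : (f.trunc v.1.length).1 <+: v.1 := by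
      have := f.trunc_prefix_trunc h.length_le
      rw [hz] at this
      exact List.prefix_of_prefix_length_le this h (by rw [f.length_trunc])
    exact Subtype.ext (hpre.eq_of_length (f.length_trunc _))

lemma nhds_endIncl (f : Ends c) : 𝓝 (endIncl c f) = ⨅ n, 𝓟 (hatT c (f.trunc n)) := by
  rw [TopologicalSpace.nhds_generateFrom]
  apply le_antisymm
  · exact le_iInf fun n =>
      iInf₂_le _ ⟨endIncl_mem_hatT_iff.mpr (by rw [f.length_trunc]), Or.inr ⟨_, rfl⟩⟩
  · refine le_iInf₂ fun s ⟨hfs, hs⟩ => ?_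
    rcases hs with ⟨v, rfl⟩ | ⟨v, rfl⟩
    · exact absurd (Set.mem_singleton_iff.mp hfs) Sum.inr_ne_inl
    · exact iInf_le_of_le v.1.length (by rw [endIncl_mem_hatT_iff.mp hfs])

lemma hasBasis_nhds_endIncl (f : Ends c) :
    (𝓝 (endIncl c f)).HasBasis (fun _ => True) fun n => hatT c (f.trunc n) := by
  rw [nhds_endIncl]
  exact Filter.hasBasis_iInf_principal
    (Antitone.directed_ge fun _ _ h => hatT_anti (f.trunc_prefix_trunc h))

lemma mem_bdry_iff {A : Set (Vtx c)} {f : Ends c} :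
    f ∈ bdry c A ↔ ∀ n, ∃ w ∈ A, (f.trunc n).1 <+: w.1 := by
  rw [bdry, Set.mem_ofPred_eq, mem_closure_iff_nhds_basis (hasBasis_nhds_endIncl f)]
  simp only [true_implies, Set.exists_mem_image]
  rfl

lemma bdry_mono {A B : Set (Vtx c)} (h : A ⊆ B) : bdry c A ⊆ bdry c B :=
  fun _ hf => closure_mono (Set.image_mono h) hf

lemma bdry_union (A B : Set (Vtx c)) : bdry c (A ∪ B) = bdry c A ∪ bdry c B := by
  ext f
  simp only [bdry, Set.mem_ofPred_eq, Set.image_union, closure_union, Set.mem_union]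

lemma treeGraph.mem_support_of_prefix (v : Vtx c) {x y : Vtx c} (W : (treeGraph c).Walk x y)
    (hx : ¬ v.1 <+: x.1) (hy : v.1 <+: y.1) : v ∈ W.support := by
  induction W with
  | nil => exact absurd hy hx
  | @cons a b _ hab W ih =>
    rw [SimpleGraph.Walk.support_cons]
    by_cases hb : v.1 <+: b.1
    · rcases hab with ⟨k, hk⟩ | ⟨k, hk⟩
      · rcases List.prefix_concat_iff.mp (hk ▸ hb) with h | h
        · obtain rfl : v = b := Subtype.ext (h.trans hk.symm)
          exact List.mem_cons_of_mem _ W.start_mem_support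
        · exact absurd h hx
      · exact absurd (hb.trans ⟨[k], hk.symm⟩) hx
    · exact List.mem_cons_of_mem _ (ih hb hy)

lemma treeGraph.induce_reachable_of_prefix {s : Set (Vtx c)} {x y v : Vtx c} (hx : x ∈ s)
    (hy : y ∈ s) (h : ((treeGraph c).induce s).Reachable ⟨x, hx⟩ ⟨y, hy⟩)
    (hvx : ¬ v.1 <+: x.1) (hvy : v.1 <+: y.1) :
    ∃ hv : v ∈ s, ((treeGraph c).induce s).Reachable ⟨x, hx⟩ ⟨v, hv⟩ := by
  classical
  obtain ⟨W⟩ := h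
  have hW := treeGraph.mem_support_of_prefix v (W.map (SimpleGraph.Embedding.induce s).toHom)
    hvx hvy
  rw [SimpleGraph.Walk.support_map, List.mem_map] at hW
  obtain ⟨u, hu, rfl⟩ := hW
  exact ⟨u.2, ⟨W.takeUntil u hu⟩⟩

def PrefixClosedAwayFrom (S : Set (Vtx c)) (a : Vtx c) : Prop :=
  ∀ ⦃v w : Vtx c⦄, w ∈ S → v.1 <+: w.1 → ¬ v.1 <+: a.1 → v ∈ S

lemma prefixClosedAwayFrom_reachable {s : Set (Vtx c)} {x : Vtx c} (hx : x ∈ s) :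
    PrefixClosedAwayFrom
      {y | ∃ hy : y ∈ s, ((treeGraph c).induce s).Reachable ⟨x, hx⟩ ⟨y, hy⟩} x :=
  fun _ _ ⟨hw, hxw⟩ hvw hvx => treeGraph.induce_reachable_of_prefix hx hw hxw hvx hvw

lemma SimpleGraph.Connected.prefixClosedAwayFrom {A : Set (Vtx c)}
    (hA : ((treeGraph c).induce A).Connected) {a : Vtx c} (ha : a ∈ A) :
    PrefixClosedAwayFrom A a :=
  fun _ _ hw hvw hva =>
    (prefixClosedAwayFrom_reachable ha ⟨hw, hA.preconnected _ _⟩ hvw hva).1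

lemma PrefixClosedAwayFrom.eventually_trunc_mem {S : Set (Vtx c)} {a : Vtx c}
    (hS : PrefixClosedAwayFrom S a) {f : Ends c} (hf : f ∈ bdry c S) :
    ∀ᶠ n in atTop, f.trunc n ∈ S := by
  refine eventually_atTop.mpr ⟨a.1.length + 1, fun n hn => ?_⟩
  obtain ⟨w, hw, hfw⟩ := mem_bdry_iff.mp hf n
  refine hS hw hfw fun hfa => ?_
  have := hfa.length_le
  rw [f.length_trunc] at this
  omega

lemma SimpleGraph.Connected.eventually_trunc_mem {A : Set (Vtx c)}
    (hA : ((treeGraph c).induce A).Connected) {f : Ends c} (hf : f ∈ bdry c A) :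
    ∀ᶠ n in atTop, f.trunc n ∈ A :=
  have ⟨a⟩ := hA.nonempty
  (hA.prefixClosedAwayFrom a.2).eventually_trunc_mem hf

lemma exists_infinite_child {S : Set (Vtx c)} {l : List ℕ}
    (h : {w ∈ S | l <+: w.1}.Infinite) : ∃ k, {w ∈ S | l ++ [k] <+: w.1}.Infinite := by
  by_contra! hfin
  have hl : {w : Vtx c | w.1 = l}.Subsingleton := fun v hv w hw => Subtype.ext (hv.trans hw.symm)
  refine h ((hl.finite.union
    ((Set.finite_Iio (c l)).biUnion fun k _ => hfin k)).subset ?_)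
  rintro w ⟨hwS, t, hw⟩
  rcases t with _ | ⟨k, t⟩
  · exact Or.inl (hw.symm.trans (List.append_nil l))
  · have hk : l ++ [k] <+: w.1 := ⟨t, by rw [List.append_assoc, List.singleton_append, hw]⟩
    exact Or.inr (Set.mem_biUnion (w.2 l k hk) ⟨hwS, hk⟩)

-- König's lemma.
lemma bdry_nonempty_of_infinite {S : Set (Vtx c)} (hS : S.Infinite) : (bdry c S).Nonempty := by
  choose! k hk using fun l (h : {w ∈ S | l <+: w.1}.Infinite) => exists_infinite_child h
  let u : ℕ → List ℕ := fun n => Nat.rec [] (fun _ l => l ++ [k l]) n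
  have hu : ∀ n, {w ∈ S | u n <+: w.1}.Infinite := by
    intro n
    induction n with
    | zero => simpa [u] using hS
    | succ n ih => exact hk _ ih
  have hOK : ∀ n, vertexOK c (u n) := fun n =>
    have ⟨w, _, hw⟩ := (hu n).nonempty
    w.2.of_prefix hw
  have hf : ∀ n, (List.ofFn fun i : Fin n => k (u i)) = u n := by
    intro n
    induction n with
    | zero => rfl
    | succ n ih => rw [List.ofFn_succ_last]; simp only [Fin.val_castSucc, Fin.val_last, ih]; rfl
  refine ⟨⟨fun n => k (u n), fun n => hf n ▸ hOK n⟩, mem_bdry_iff.mpr fun n => ?_⟩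
  obtain ⟨w, hwS, hw⟩ := (hu n).nonempty
  refine ⟨w, hwS, ?_⟩
  show (List.ofFn fun i : Fin n => k (u i)) <+: w.1
  rwa [hf n]

/-- If `A` and `B` are connected subsets of a (locally finite) tree with
`∂A = ∂B ≠ ∅`, then `A ∩ B ≠ ∅` and every connected component of the symmetric
difference `A △ B` is finite. -/
theorem stmt17 (c : List ℕ → ℕ) (A B : Set (Vtx c))
    (hA : ((treeGraph c).induce A).Connected)
    (hB : ((treeGraph c).induce B).Connected)
    (hbd : bdry c A = bdry c B) (hne : (bdry c A).Nonempty) :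
    (A ∩ B).Nonempty ∧
      ∀ (x : Vtx c) (hx : x ∈ symmDiff A B),
        {y : Vtx c | ∃ hy : y ∈ symmDiff A B,
          ((treeGraph c).induce (symmDiff A B)).Reachable ⟨x, hx⟩ ⟨y, hy⟩}.Finite := by
  refine ⟨?_, fun x hx => Set.not_infinite.mp fun hC => ?_⟩
  · obtain ⟨f, hf⟩ := hne
    obtain ⟨n, hnA, hnB⟩ :=
      ((hA.eventually_trunc_mem hf).and (hB.eventually_trunc_mem (hbd ▸ hf))).exists
    exact ⟨_, hnA, hnB⟩
  · obtain ⟨g, hgC⟩ := bdry_nonempty_of_infinite hC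
    have hgA : g ∈ bdry c A := by
      have := bdry_mono (fun y (hy : ∃ _ : y ∈ symmDiff A B, _) =>
        Set.symmDiff_subset_union hy.1) hgC
      rwa [bdry_union, ← hbd, Set.union_self] at this
    obtain ⟨n, hnA, hnB, hnC, -⟩ := ((hA.eventually_trunc_mem hgA).and
      ((hB.eventually_trunc_mem (hbd ▸ hgA)).and
        ((prefixClosedAwayFrom_reachable hx).eventually_trunc_mem hgC))).exists
    exact (Set.mem_symmDiff.mp hnC).elim (fun h => h.2 hnB) fun h => h.2 hnA
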